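/- Assume N=1 and hypotheses (H) with f_∞≡0 on [0,1] (case (H6)(b)). If (λ_n,u_n) is a sequence of nontrivial solutions of (P) with λ_n>0 and λ_n→∞, then |u_n|_0→∞. -/

import Mathlib

open Set MeasureTheory Filter Topology intervalIntegral

noncomputable section

/-- `phi p ξ = |ξ|^(p-2) ξ`, the function `φ_p`. -/
def phi (p ξ : ℝ) : ℝ := |ξ| ^ (p - 2) * ξ

/-- The (one-sided at endpoints) derivative of a function on `[0,1]`. -/
def deriv01 (u : ℝ → ℝ) (r : ℝ) : ℝ := derivWithin u (Set.Icc 0 1) r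

/-- `u ∈ C^1([0,1],ℝ)`. -/
def C1on01 (u : ℝ → ℝ) : Prop :=
  (∀ r ∈ Set.Icc (0:ℝ) 1, DifferentiableWithinAt ℝ u (Set.Icc 0 1) r) ∧
  ContinuousOn (deriv01 u) (Set.Icc 0 1)

/-- `J(h)(s) = ∫_0^s (t/s)^(N-1) h(t) dt`, with `J(h)(0) = 0`. -/
def Jmap (N : ℕ) (h : ℝ → ℝ) (s : ℝ) : ℝ :=
  if s = 0 then 0 else ∫ t in (0:ℝ)..s, (t / s) ^ (N - 1) * h t

/-- `S_p(h)(r) = ∫_r^1 φ_{p'}(J(h)(s)) ds` where `p' = p/(p-1)`. -/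
def Sp (p : ℝ) (N : ℕ) (h : ℝ → ℝ) (r : ℝ) : ℝ :=
  ∫ s in r..(1:ℝ), phi (p / (p - 1)) (Jmap N h s)

/-- The sup norm over `[0,1]`. -/
def norm0 (h : ℝ → ℝ) : ℝ := sSup ((fun t => |h t|) '' Set.Icc 0 1)

/-- `u` is not identically zero on `[0,1]`. -/
def Nontriv01 (u : ℝ → ℝ) : Prop := ∃ r ∈ Set.Icc (0:ℝ) 1, u r ≠ 0

/-- `(lam, u)` is a solution of problem (P):
`-(r^(N-1) φ_p(u'))' = lam r^(N-1) f(r, u(r))` on `(0,1)`, `u'(0) = u(1) = 0`. -/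
def IsSolutionP (p : ℝ) (N : ℕ) (f : ℝ → ℝ → ℝ) (lam : ℝ) (u : ℝ → ℝ) : Prop :=
  C1on01 u ∧ C1on01 (fun r => phi p (deriv01 u r)) ∧
  (∀ r ∈ Set.Ioo (0:ℝ) 1,
      HasDerivAt (fun s => s ^ (N - 1) * phi p (deriv01 u s))
        (-(lam * r ^ (N - 1) * f r (u r))) r) ∧
  deriv01 u 0 = 0 ∧ u 1 = 0

/-- `(lam, v)` is a principal eigenpair for the weight `w`. -/
def IsPrincipalEigenpair (p : ℝ) (N : ℕ) (w : ℝ → ℝ) (lam : ℝ) (v : ℝ → ℝ) : Prop :=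
  0 < lam ∧ C1on01 v ∧ C1on01 (fun r => phi p (deriv01 v r)) ∧
  (∀ r ∈ Set.Ico (0:ℝ) 1, 0 < v r) ∧
  (∀ r ∈ Set.Ioo (0:ℝ) 1,
      HasDerivAt (fun s => s ^ (N - 1) * phi p (deriv01 v s))
        (-(lam * r ^ (N - 1) * w r * phi p (v r))) r) ∧
  deriv01 v 0 = 0 ∧ v 1 = 0

/-- Hypotheses (H) of the paper: (H1)–(H6), with `f₂ = ∂₂f` and asymptotes `f0`, `finf`. -/
structure HypH (p : ℝ) (N : ℕ) (f f₂ : ℝ → ℝ → ℝ) (f0 finf : ℝ → ℝ) : Prop where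
  hp : 2 < p
  hN : 1 ≤ N
  hf_cont : ContinuousOn (fun q : ℝ × ℝ => f q.1 q.2) (Set.Icc 0 1 ×ˢ Set.univ)
  hf_deriv : ∀ r ∈ Set.Icc (0:ℝ) 1, ∀ ξ : ℝ, HasDerivAt (fun t => f r t) (f₂ r ξ) ξ
  hf₂_cont : ContinuousOn (fun q : ℝ × ℝ => f₂ q.1 q.2) (Set.Icc 0 1 ×ˢ Set.univ)
  hH2 : ∀ r ∈ Set.Icc (0:ℝ) 1, ∀ ξ : ℝ, ξ ≠ 0 → 0 < f r ξ
  hf_zero : ∀ r ∈ Set.Icc (0:ℝ) 1, f r 0 = 0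
  hH3 : ∀ r ∈ Set.Icc (0:ℝ) 1, ∀ ξ : ℝ, 0 ≤ ξ → f₂ r ξ * ξ ≤ (p - 1) * f r ξ
  hH3s : ∃ δ > 0, ∃ ε > 0, ∀ r ∈ Set.Ioc (1 - δ) 1, ∀ ξ ∈ Set.Ioo (0:ℝ) ε,
      f₂ r ξ * ξ < (p - 1) * f r ξ
  hf0_cont : ContinuousOn f0 (Set.Icc 0 1)
  hfinf_cont : ContinuousOn finf (Set.Icc 0 1)
  hH4a : ∀ e > 0, ∃ d > 0, ∀ ξ ∈ Set.Ioo (0:ℝ) d, ∀ r ∈ Set.Icc (0:ℝ) 1,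
      |f r ξ / phi p ξ - f0 r| < e
  hH4b : ∀ e > 0, ∃ d > 0, ∀ ξ ∈ Set.Ioo (0:ℝ) d, ∀ r ∈ Set.Icc (0:ℝ) 1,
      |f₂ r ξ / ξ ^ (p - 2) - (p - 1) * f0 r| < e
  hH5 : ∀ e > 0, ∃ M : ℝ, ∀ ξ : ℝ, M ≤ ξ → ∀ r ∈ Set.Icc (0:ℝ) 1,
      |f r ξ / phi p ξ - finf r| < e
  hH6 : (∀ r ∈ Set.Icc (0:ℝ) 1, 0 < finf r) ∨ (N = 1 ∧ ∀ r ∈ Set.Icc (0:ℝ) 1, finf r = 0)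

lemma phi_zero (p : ℝ) : phi p 0 = 0 := by simp [phi]

lemma phi_nonneg (p : ℝ) {ξ : ℝ} (h : 0 ≤ ξ) : 0 ≤ phi p ξ :=
  mul_nonneg (Real.rpow_nonneg (abs_nonneg _) _) h

lemma phi_neg_eq (p : ℝ) {ξ : ℝ} (h : ξ < 0) : phi p ξ = -((-ξ) ^ (p - 1)) := by
  have h1 : |ξ| = -ξ := abs_of_neg h
  have h2 : (0:ℝ) < -ξ := by linarith
  have : (-ξ) ^ (p - 1) = (-ξ) ^ (p - 2) * (-ξ) := by
    rw [show p - 1 = (p-2) + 1 by ring, Real.rpow_add h2, Real.rpow_one]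
  rw [phi, h1, this]; ring

lemma le_neg_of_phi_le_neg {p : ℝ} (hp : 2 < p) {ξ B : ℝ} (hB : 0 < B)
    (h : phi p ξ ≤ -B) : ξ ≤ -(B ^ (1 / (p - 1))) := by
  set A := B ^ (1 / (p - 1)) with hA
  have hApos : 0 < A := Real.rpow_pos_of_pos hB _
  have hAp : A ^ (p - 1) = B := by
    rw [hA, ← Real.rpow_mul hB.le, one_div,
      inv_mul_cancel₀ (by linarith : p - 1 ≠ 0), Real.rpow_one]
  by_contra hcon
  push_neg at hcon
  rcases le_or_gt 0 ξ with hξ | hξ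
  · have := phi_nonneg p hξ; linarith
  · rw [phi_neg_eq p hξ] at h
    have h3 : B ≤ (-ξ) ^ (p - 1) := by linarith
    have h4 : (-ξ) ^ (p - 1) < A ^ (p - 1) :=
      Real.rpow_lt_rpow (by linarith) (by linarith) (by linarith)
    rw [hAp] at h4; linarith

lemma nonpos_of_phi_nonpos {p : ℝ} {ξ : ℝ} (h : phi p ξ ≤ 0) : ξ ≤ 0 := by
  by_contra hcon
  push_neg at hcon
  have : 0 < phi p ξ :=
    mul_pos (Real.rpow_pos_of_pos (by rwa [abs_of_pos hcon]) _) hcon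
  linarith

/-- From (H2)+(H3): `f(r,ξ) ≥ c ξ^(p-1)` for `0 < ξ ≤ M`, with `c > 0`. -/
lemma exists_lower_const (p : ℝ) (f f₂ : ℝ → ℝ → ℝ) (f0 finf : ℝ → ℝ)
    (H : HypH p 1 f f₂ f0 finf) (M : ℝ) (hM : 0 < M) :
    ∃ c > 0, ∀ r ∈ Set.Icc (0:ℝ) 1, ∀ ξ : ℝ, 0 < ξ → ξ ≤ M →
      c * ξ ^ (p - 1) ≤ f r ξ := by
  have hp := H.hp
  have hfM_cont : ContinuousOn (fun r : ℝ => f r M) (Set.Icc 0 1) := by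
    have : ContinuousOn (fun r : ℝ => ((r, M) : ℝ × ℝ)) (Set.Icc 0 1) :=
      (continuous_id.prodMk continuous_const).continuousOn
    exact H.hf_cont.comp this (fun r hr => ⟨hr, mem_univ _⟩)
  obtain ⟨rm, hrm, hmin⟩ := isCompact_Icc.exists_isMinOn (nonempty_Icc.2 zero_le_one) hfM_cont
  have hMp : (0:ℝ) < M ^ (p - 1) := Real.rpow_pos_of_pos hM _
  refine ⟨f rm M / M ^ (p - 1), div_pos (H.hH2 rm hrm M hM.ne') hMp, ?_⟩
  intro r hr ξ hξ hξM
  -- antitonicity of x ↦ f r x * x^(1-p) on (0,∞)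
  have hG : ∀ x ∈ Set.Ioi (0:ℝ), HasDerivAt (fun x => f r x * x ^ (1 - p))
      (f₂ r x * x ^ (1 - p) + f r x * ((1 - p) * x ^ (1 - p - 1))) x := by
    intro x hx
    exact (H.hf_deriv r hr x).mul (Real.hasDerivAt_rpow_const (Or.inl (ne_of_gt hx)))
  have anti : AntitoneOn (fun x => f r x * x ^ (1 - p)) (Set.Ioi (0:ℝ)) := by
    apply antitoneOn_of_deriv_nonpos (convex_Ioi 0)
    · intro x hx
      exact (hG x hx).continuousAt.continuousWithinAt
    · rw [interior_Ioi]
      intro x hx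
      exact (hG x hx).differentiableAt.differentiableWithinAt
    · rw [interior_Ioi]
      intro x hx
      rw [(hG x hx).deriv]
      have hxpos : (0:ℝ) < x := hx
      have hxp : (0:ℝ) < x ^ (1 - p - 1) := Real.rpow_pos_of_pos hxpos _
      have h1 : x ^ (1 - p - 1) * x = x ^ (1 - p) := by
        rw [← Real.rpow_add_one hxpos.ne']; ring_nf
      rw [← h1]
      have h3 := H.hH3 r hr x hxpos.le
      nlinarith [hxp]
  have key := anti (mem_Ioi.2 hξ) (mem_Ioi.2 hM) hξM
  -- key : f r M * M^(1-p) ≤ f r ξ * ξ^(1-p)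
  have hmin' : f rm M ≤ f r M := hmin hr
  have hM1p : (0:ℝ) < M ^ (1 - p) := Real.rpow_pos_of_pos hM _
  have step1 : f rm M * M ^ (1 - p) ≤ f r ξ * ξ ^ (1 - p) :=
    le_trans (mul_le_mul_of_nonneg_right hmin' hM1p.le) key
  have hξp : (0:ℝ) < ξ ^ (p - 1) := Real.rpow_pos_of_pos hξ _
  have step2 : f rm M * M ^ (1 - p) * ξ ^ (p - 1) ≤ f r ξ := by
    have := mul_le_mul_of_nonneg_right step1 hξp.le
    calc f rm M * M ^ (1 - p) * ξ ^ (p - 1) ≤ f r ξ * ξ ^ (1 - p) * ξ ^ (p - 1) := this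
      _ = f r ξ * (ξ ^ (1 - p) * ξ ^ (p - 1)) := by ring
      _ = f r ξ := by
          rw [← Real.rpow_add hξ]
          norm_num
  have hMinv : M ^ (1 - p) = (M ^ (p - 1))⁻¹ := by
    rw [show (1:ℝ) - p = -(p - 1) by ring, Real.rpow_neg hM.le]
  rw [div_eq_mul_inv, ← hMinv]
  exact step2

/-- A priori bound: a nontrivial solution with `|u|₀ ≤ M` forces `lam ≤ 2^p / c`. -/
lemma lam_bound (p : ℝ) (f f₂ : ℝ → ℝ → ℝ) (f0 finf : ℝ → ℝ)
    (H : HypH p 1 f f₂ f0 finf) (M c : ℝ) (hM : 0 < M) (hc : 0 < c)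
    (hcf : ∀ r ∈ Set.Icc (0:ℝ) 1, ∀ ξ : ℝ, 0 < ξ → ξ ≤ M → c * ξ ^ (p - 1) ≤ f r ξ)
    (lam : ℝ) (u : ℝ → ℝ) (hl : 0 < lam) (hsol : IsSolutionP p 1 f lam u)
    (hnt : Nontriv01 u) (hb : norm0 u ≤ M) : lam ≤ 2 ^ p / c := by
  have hp := H.hp
  obtain ⟨⟨hudiff, hu'cont⟩, ⟨hgdiff, _⟩, hode, hu'0, hu1⟩ := hsol
  simp only [Nat.sub_self, pow_zero, one_mul, mul_one] at hode
  have hucont : ContinuousOn u (Set.Icc 0 1) := fun r hr => (hudiff r hr).continuousWithinAt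
  have hgcont : ContinuousOn (fun r => phi p (deriv01 u r)) (Set.Icc 0 1) :=
    fun r hr => (hgdiff r hr).continuousWithinAt
  -- continuity of t ↦ f t (u t)
  have hhcont : ContinuousOn (fun t => f t (u t)) (Set.Icc 0 1) := by
    have hpair : ContinuousOn (fun t : ℝ => ((t, u t) : ℝ × ℝ)) (Set.Icc 0 1) :=
      continuousOn_id.prodMk hucont
    exact H.hf_cont.comp hpair (fun t ht => ⟨ht, mem_univ _⟩)
  have hhint : ∀ a b : ℝ, a ∈ Set.Icc (0:ℝ) 1 → b ∈ Set.Icc (0:ℝ) 1 → a ≤ b →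
      IntervalIntegrable (fun t => f t (u t)) volume a b := by
    intro a b ha hb hab
    exact (hhcont.mono (fun t ht => ⟨ha.1.trans ht.1, ht.2.trans hb.2⟩ :
      Set.Icc a b ⊆ Set.Icc 0 1)).intervalIntegrable_of_Icc hab
  -- f nonneg along u
  have hfnn : ∀ t ∈ Set.Icc (0:ℝ) 1, 0 ≤ f t (u t) := by
    intro t ht
    rcases eq_or_ne (u t) 0 with h | h
    · rw [h, H.hf_zero t ht]
    · exact (H.hH2 t ht _ h).le
  -- FTC for g = φ_p ∘ u'
  have hg : ∀ r ∈ Set.Icc (0:ℝ) 1,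
      phi p (deriv01 u r) = -(lam * ∫ t in (0:ℝ)..r, f t (u t)) := by
    intro r hr
    have hftc := integral_eq_sub_of_hasDeriv_right_of_le hr.1
      (hgcont.mono (fun t ht => ⟨ht.1, ht.2.trans hr.2⟩))
      (fun x hx => ((hode x ⟨hx.1, hx.2.trans_le hr.2⟩).hasDerivWithinAt))
      (by
        apply ContinuousOn.intervalIntegrable_of_Icc hr.1
        exact (continuousOn_const.mul (hhcont.mono
          (fun t ht => ⟨ht.1, ht.2.trans hr.2⟩))).neg)
    rw [show phi p (deriv01 u 0) = 0 by rw [hu'0]; exact phi_zero p, sub_zero] at hftc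
    rw [← hftc, intervalIntegral.integral_neg, intervalIntegral.integral_const_mul]
  -- the interval integral of f(t,u t) is nonneg and monotone in r
  have hInn : ∀ r ∈ Set.Icc (0:ℝ) 1, 0 ≤ ∫ t in (0:ℝ)..r, f t (u t) := by
    intro r hr
    exact intervalIntegral.integral_nonneg hr.1 (fun t ht => hfnn t ⟨ht.1, ht.2.trans hr.2⟩)
  -- u' at interior points
  have hud : ∀ r ∈ Set.Ioo (0:ℝ) 1, HasDerivAt u (deriv01 u r) r := by
    intro r hr
    exact ((hudiff r (Ioo_subset_Icc_self hr)).hasDerivWithinAt).hasDerivAt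
      (Icc_mem_nhds hr.1 hr.2)
  -- u is antitone
  have hAnti : AntitoneOn u (Set.Icc 0 1) := by
    apply antitoneOn_of_deriv_nonpos (convex_Icc 0 1) hucont
    · rw [interior_Icc]
      exact fun r hr => (hud r hr).differentiableAt.differentiableWithinAt
    · rw [interior_Icc]
      intro r hr
      rw [(hud r hr).deriv]
      apply nonpos_of_phi_nonpos
      rw [hg r (Ioo_subset_Icc_self hr)]
      have := hInn r (Ioo_subset_Icc_self hr)
      nlinarith
  have h01 : (0:ℝ) ∈ Set.Icc (0:ℝ) 1 := by norm_num
  have h11 : (1:ℝ) ∈ Set.Icc (0:ℝ) 1 := by norm_num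
  have hh : (1/2 : ℝ) ∈ Set.Icc (0:ℝ) 1 := by norm_num
  have hunn : ∀ t ∈ Set.Icc (0:ℝ) 1, 0 ≤ u t := by
    intro t ht
    have := hAnti ht h11 ht.2
    rw [hu1] at this; exact this
  -- u 0 > 0
  obtain ⟨r₀, hr₀, hne⟩ := hnt
  have hur₀ : 0 < u r₀ := (hunn r₀ hr₀).lt_of_ne (Ne.symm hne)
  have hu0 : 0 < u 0 := lt_of_lt_of_le hur₀ (hAnti h01 hr₀ hr₀.1)
  -- u ≤ M
  have hbdd : BddAbove ((fun t => |u t|) '' Set.Icc 0 1) :=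
    (isCompact_Icc.image_of_continuousOn hucont.abs).bddAbove
  have huM : ∀ t ∈ Set.Icc (0:ℝ) 1, u t ≤ M := by
    intro t ht
    calc u t ≤ |u t| := le_abs_self _
      _ ≤ norm0 u := le_csSup hbdd ⟨t, ht, rfl⟩
      _ ≤ M := hb
  -- I := ∫_0^{1/2} f(t, u t) > 0
  set I := ∫ t in (0:ℝ)..(1/2:ℝ), f t (u t) with hI
  have hIpos : 0 < I := by
    have hh0 : 0 < f 0 (u 0) := H.hH2 0 h01 _ hu0.ne'
    have hcw : ContinuousWithinAt (fun t => f t (u t)) (Set.Icc 0 1) 0 := hhcont 0 h01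
    have hev : (fun t => f t (u t)) ⁻¹' Set.Ioi 0 ∈ 𝓝[Set.Icc (0:ℝ) 1] 0 :=
      hcw (Ioi_mem_nhds hh0)
    rw [Metric.mem_nhdsWithin_iff] at hev
    obtain ⟨ε, hε, hsub⟩ := hev
    set η : ℝ := min (ε/2) (1/2) with hη
    have hηpos : 0 < η := lt_min (by linarith) (by norm_num)
    have hη2 : η ≤ 1/2 := min_le_right _ _
    have hpos : ∀ t ∈ Set.Ioo (0:ℝ) η, 0 < f t (u t) := by
      intro t ht
      apply hsub
      constructor
      · rw [Metric.mem_ball, Real.dist_eq, sub_zero, abs_of_pos ht.1]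
        exact ht.2.trans_le ((min_le_left _ _).trans (by linarith))
      · exact ⟨ht.1.le, ht.2.le.trans (by linarith)⟩
    have h1 : 0 < ∫ t in (0:ℝ)..η, f t (u t) :=
      intervalIntegral_pos_of_pos_on
        (hhint 0 η h01 ⟨hηpos.le, by linarith⟩ hηpos.le) hpos hηpos
    have h2 : (∫ t in (0:ℝ)..η, f t (u t)) ≤ I := by
      apply intervalIntegral.integral_mono_interval le_rfl hηpos.le hη2
      · filter_upwards [ae_restrict_mem measurableSet_Ioc] with t ht
        exact hfnn t ⟨ht.1.le, ht.2.trans (by norm_num)⟩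
      · exact hhint 0 (1/2) h01 hh (by norm_num)
    linarith
  set A : ℝ := (lam * I) ^ (1/(p-1)) with hA
  have hlampos : 0 < lam * I := mul_pos hl hIpos
  have hApos : 0 < A := Real.rpow_pos_of_pos hlampos _
  -- u' ≤ -A on [1/2, 1]
  have hu'le : ∀ r ∈ Set.Icc (1/2:ℝ) 1, deriv01 u r ≤ -A := by
    intro r hr
    have hr' : r ∈ Set.Icc (0:ℝ) 1 := ⟨le_trans (by norm_num) hr.1, hr.2⟩
    have hmono : I ≤ ∫ t in (0:ℝ)..r, f t (u t) := by
      apply intervalIntegral.integral_mono_interval le_rfl (by norm_num) hr.1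
      · filter_upwards [ae_restrict_mem measurableSet_Ioc] with t ht
        exact hfnn t ⟨ht.1.le, ht.2.trans hr'.2⟩
      · exact hhint 0 r h01 hr' hr'.1
    have hphile : phi p (deriv01 u r) ≤ -(lam * I) := by
      rw [hg r hr']
      have : lam * I ≤ lam * ∫ t in (0:ℝ)..r, f t (u t) :=
        mul_le_mul_of_nonneg_left hmono hl.le
      linarith
    exact le_neg_of_phi_le_neg hp hlampos hphile
  -- FTC for u on [1/2, 1]
  have hftcu : (∫ t in (1/2:ℝ)..1, deriv01 u t) = u 1 - u (1/2) := by
    apply integral_eq_sub_of_hasDeriv_right_of_le (by norm_num)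
      (hucont.mono (fun t ht => ⟨le_trans (by norm_num) ht.1, ht.2⟩))
    · intro x hx
      exact (hud x ⟨lt_trans (by norm_num) hx.1, hx.2⟩).hasDerivWithinAt
    · exact (hu'cont.mono (fun t ht =>
        ⟨le_trans (by norm_num) ht.1, ht.2⟩ : Set.Icc (1/2:ℝ) 1 ⊆ Set.Icc 0 1
        )).intervalIntegrable_of_Icc (by norm_num)
  have hint_u' : IntervalIntegrable (deriv01 u) volume (1/2) 1 :=
    (hu'cont.mono (fun t ht =>
      ⟨le_trans (by norm_num) ht.1, ht.2⟩ : Set.Icc (1/2:ℝ) 1 ⊆ Set.Icc 0 1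
      )).intervalIntegrable_of_Icc (by norm_num)
  have hintle : (∫ t in (1/2:ℝ)..1, deriv01 u t) ≤ ∫ t in (1/2:ℝ)..1, (-A : ℝ) :=
    intervalIntegral.integral_mono_on (by norm_num) hint_u'
      intervalIntegrable_const hu'le
  have ha2 : A / 2 ≤ u (1/2) := by
    rw [hftcu, hu1] at hintle
    rw [intervalIntegral.integral_const] at hintle
    simp only [smul_eq_mul] at hintle
    linarith
  set a : ℝ := u (1/2) with haa
  have hapos : 0 < a := lt_of_lt_of_le (by linarith) ha2
  -- I ≥ (1/2) c a^(p-1)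
  have happ : 0 < a ^ (p-1) := Real.rpow_pos_of_pos hapos _
  have hIlb : (1/2 : ℝ) * (c * a ^ (p-1)) ≤ I := by
    have hmon : ∀ t ∈ Set.Icc (0:ℝ) (1/2), c * a ^ (p-1) ≤ f t (u t) := by
      intro t ht
      have ht' : t ∈ Set.Icc (0:ℝ) 1 := ⟨ht.1, ht.2.trans (by norm_num)⟩
      have hau : a ≤ u t := hAnti ht' hh ht.2
      have hut : 0 < u t := lt_of_lt_of_le hapos hau
      calc c * a ^ (p-1) ≤ c * (u t) ^ (p-1) := by
            apply mul_le_mul_of_nonneg_left _ hc.le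
            exact Real.rpow_le_rpow hapos.le hau (by linarith)
        _ ≤ f t (u t) := hcf t ht' _ hut (huM t ht')
    have := intervalIntegral.integral_mono_on (by norm_num : (0:ℝ) ≤ 1/2)
      intervalIntegrable_const (hhint 0 (1/2) h01 hh (by norm_num)) hmon
    rw [intervalIntegral.integral_const] at this
    simp only [smul_eq_mul, sub_zero] at this
    exact this
  -- conclude
  have hAp : A ^ (p-1) = lam * I := by
    rw [hA, ← Real.rpow_mul hlampos.le, one_div,
      inv_mul_cancel₀ (by linarith : p - 1 ≠ 0), Real.rpow_one]
  have hX : A ^ (p-1) / 2 ^ (p-1) ≤ a ^ (p-1) := by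
    have := Real.rpow_le_rpow (by positivity : (0:ℝ) ≤ A/2) ha2 (by linarith : (0:ℝ) ≤ p-1)
    rwa [Real.div_rpow hApos.le (by norm_num : (0:ℝ) ≤ 2)] at this
  have h2p : (2:ℝ) ^ p = 2 ^ (p-1) * 2 := by
    rw [← Real.rpow_add_one (by norm_num : (2:ℝ) ≠ 0)]; ring_nf
  have h2pp : (0:ℝ) < 2 ^ (p-1) := Real.rpow_pos_of_pos (by norm_num) _
  rw [le_div_iff₀ hc]
  have hkey : lam * c * a ^ (p-1) ≤ 2 ^ p * a ^ (p-1) := by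
    rw [hAp] at hX
    rw [h2p]
    have e1 : lam * ((1/2) * (c * a ^ (p-1))) ≤ lam * I :=
      mul_le_mul_of_nonneg_left hIlb hl.le
    rw [div_le_iff₀ h2pp] at hX
    linarith
  have := le_of_mul_le_mul_right (by nlinarith : lam * c * a^(p-1) ≤ 2^p * a^(p-1)) happ
  linarith
/-- for `N = 1` under (H) with `f∞ ≡ 0`, if `λₙ → ∞` along nontrivial
solutions then `|uₙ|₀ → ∞`. -/
theorem stmt_16 (p : ℝ) (f f₂ : ℝ → ℝ → ℝ) (f0 finf : ℝ → ℝ)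
    (H : HypH p 1 f f₂ f0 finf)
    (hfinf : ∀ r ∈ Set.Icc (0:ℝ) 1, finf r = 0)
    (lamn : ℕ → ℝ) (un : ℕ → ℝ → ℝ)
    (hpos : ∀ n, 0 < lamn n)
    (hsol : ∀ n, IsSolutionP p 1 f (lamn n) (un n))
    (hnt : ∀ n, Nontriv01 (un n))
    (hto : Filter.Tendsto lamn Filter.atTop Filter.atTop) :
    Filter.Tendsto (fun n => norm0 (un n)) Filter.atTop Filter.atTop := by

  rw [Filter.tendsto_atTop]
  intro C
  set M : ℝ := max C 1 with hMdef
  have hM : (0:ℝ) < M := lt_of_lt_of_le one_pos (le_max_right _ _)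
  obtain ⟨c, hc, hcf⟩ := exists_lower_const p f f₂ f0 finf H M hM
  filter_upwards [hto.eventually_gt_atTop (2 ^ p / c)] with n hn
  by_contra hcon
  push_neg at hcon
  have hb : norm0 (un n) ≤ M := le_trans hcon.le (le_max_left _ _)
  have := lam_bound p f f₂ f0 finf H M c hM hc hcf (lamn n) (un n)
    (hpos n) (hsol n) (hnt n) hb
  linarith
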